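/- arXiv:1904.04936 — 2 statements merged into one kernel-verified Lean document; each statement's English description precedes it below -/
import Mathlib

section
/- Work on the circle 𝕋 = ℝ/ℤ with Lebesgue (Haar) measure λ and open balls B(z,r). Let f_0(x) = 2x mod 1 and f_1(x) = 2x + 1/2 mod 1, and for a word ξ ∈ {0,1}^{k+1} write F_ξ^j = f_{ξ_j} ∘ ⋯ ∘ f_{ξ_1}. Then for every k ≥ 0, lim_{r→0⁺} [ Σ_{ξ ∈ {0,1}^{k+1}} 2^{−(k+1)} · λ( B(0,r) ∩ ⋂_{j=1}^{k} (F_ξ^j)^{-1}(B(0,r))ᶜ ∩ (F_ξ^{k+1})^{-1}(B(0,r)) ) ] / λ(B(0,r)) = 1/4^{k+1}. (These are the cluster coefficients q_k = 4^{−(k+1)} of the annealed Bernoulli(1/2,1/2) random system with b = 1/2, giving extremal index θ = 1 − Σ_{k≥0} 4^{−(k+1)} = 2/3.) -/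
open MeasureTheory Set Filter Metric
open scoped ENNReal

/-- The random map on the circle: `dstep b false x = 2x mod 1`,
`dstep b true x = 2x + b mod 1`. -/
noncomputable def dstep (b : ℝ) : Bool → UnitAddCircle → UnitAddCircle
  | false, x => x + x
  | true, x => x + x + (b : UnitAddCircle)

/-- The concatenation `f_{ξ_j} ∘ ⋯ ∘ f_{ξ_1}` associated to the word
`l = [ξ_1, …, ξ_j]` (the first letter of the list is applied first). -/
noncomputable def wordMap (b : ℝ) (l : List Bool) (x : UnitAddCircle) : UnitAddCircle :=
  l.foldl (fun y s => dstep b s y) x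

/-!
Since `2 • (1/2) = 0` on the circle, `F_ξ^j x = 2^j x + ξ_j / 2`. Let `‖x‖ < r` with `r` small.
A letter `ξ_j = 1` puts `F_ξ^j x` at distance about `1/2` from `0`, while a letter `0` leaves
`2^j x`. So `x` returns at time `k + 1` iff `ξ_{k+1} = 0` and `‖x‖ < r / 2^(k+1)`; such an `x`
has `‖2^j x‖ < r` for every `j`, so it has not returned before iff `ξ_1 = ⋯ = ξ_k = 1`.
Only this one word contributes, with the set `B(0, r / 2^(k+1))`, and
`2^-(k+1) · λ(B(0, r / 2^(k+1))) / λ(B(0, r)) = 4^-(k+1)`.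
-/

theorem AddCircle.volume_ball {T : ℝ} [Fact (0 < T)] (x : AddCircle T) (ε : ℝ) :
    volume (ball x ε) = ENNReal.ofReal (min T (2 * ε)) := by
  rw [← measure_congr AddCircle.closedBall_ae_eq_ball, AddCircle.volume_closedBall]

theorem norm_two_pow_nsmul_lt_of_lt_div {E : Type*} [SeminormedAddCommGroup E] {x : E} {r : ℝ}
    {n m : ℕ} (hnm : n ≤ m) (hx : ‖x‖ < r / 2 ^ m) : ‖2 ^ n • x‖ < r := by
  have hm : (2 : ℝ) ^ n ≤ 2 ^ m := pow_le_pow_right₀ one_le_two hnm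
  calc ‖2 ^ n • x‖ ≤ 2 ^ n * ‖x‖ := by simpa using norm_nsmul_le (n := 2 ^ n) (a := x)
    _ ≤ 2 ^ m * ‖x‖ := by gcongr
    _ < r := by rwa [lt_div_iff₀' (by positivity)] at hx

namespace UnitAddCircle

theorem volume_ball_zero {ε : ℝ} (h : ε ≤ 1 / 2) :
    volume (ball (0 : UnitAddCircle) ε) = ENNReal.ofReal (2 * ε) := by
  rw [AddCircle.volume_ball, min_eq_right (by linarith)]

theorem norm_nsmul_eq_mul {x : UnitAddCircle} {n : ℕ} (h : n * ‖x‖ ≤ 1 / 2) :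
    ‖n • x‖ = n * ‖x‖ := by
  obtain ⟨s, rfl, hs⟩ : ∃ s : ℝ, (s : UnitAddCircle) = x ∧ ‖x‖ = |s| := by
    induction x using QuotientAddGroup.induction_on with
    | H t => exact ⟨t - round t, by simp, norm_eq⟩
  have hns : |n * s| ≤ |(1 : ℝ)| / 2 := by rwa [abs_mul, Nat.abs_cast, ← hs, abs_one]
  rw [hs, ← AddCircle.coe_nsmul, nsmul_eq_mul,
    (AddCircle.norm_coe_eq_abs_iff (p := 1) one_ne_zero).2 hns, abs_mul, Nat.abs_cast]

theorem norm_nsmul_lt_iff {x : UnitAddCircle} {n : ℕ} {r : ℝ} (hn : 0 < n)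
    (h : n * ‖x‖ ≤ 1 / 2) : ‖n • x‖ < r ↔ ‖x‖ < r / n := by
  rw [norm_nsmul_eq_mul h, lt_div_iff₀' (by exact_mod_cast hn)]

theorem sub_norm_le_norm_add_half (y : UnitAddCircle) :
    1 / 2 - ‖y‖ ≤ ‖y + ((1 / 2 : ℝ) : UnitAddCircle)‖ := by
  have hhalf : ‖((1 / 2 : ℝ) : UnitAddCircle)‖ = 1 / 2 := by
    simpa using AddCircle.norm_half_period_eq (p := (1 : ℝ))
  have h := norm_sub_le (y + ((1 / 2 : ℝ) : UnitAddCircle)) y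
  rw [add_sub_cancel_left, hhalf] at h
  linarith

end UnitAddCircle

noncomputable def halfShift (s : Bool) : UnitAddCircle :=
  if s then ((1 / 2 : ℝ) : UnitAddCircle) else 0

theorem two_nsmul_halfShift (s : Bool) : 2 • halfShift s = 0 := by
  cases s
  · simp [halfShift]
  · rw [halfShift, if_pos rfl, ← AddCircle.coe_nsmul]
    norm_num

theorem dstep_half (s : Bool) (y : UnitAddCircle) : dstep (1 / 2) s y = 2 • y + halfShift s := by
  cases s <;> simp [dstep, halfShift, two_nsmul]

theorem wordMap_append_singleton (b : ℝ) (l : List Bool) (s : Bool) (x : UnitAddCircle) :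
    wordMap b (l ++ [s]) x = dstep b s (wordMap b l x) :=
  List.foldl_concat _ _ _ _

theorem wordMap_half_append_singleton (l : List Bool) (s : Bool) (x : UnitAddCircle) :
    wordMap (1 / 2) (l ++ [s]) x = 2 ^ (l.length + 1) • x + halfShift s := by
  induction l using List.reverseRecOn generalizing s with
  | nil => exact dstep_half s x
  | append_singleton l t ih =>
    rw [wordMap_append_singleton, ih, dstep_half, nsmul_add, two_nsmul_halfShift, add_zero,
      smul_smul, List.length_append, List.length_singleton, pow_succ' 2 (l.length + 1)]

theorem wordMap_half_ofFn_take {n : ℕ} (ξ : Fin n → Bool) (i : Fin n) (x : UnitAddCircle) :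
    wordMap (1 / 2) ((List.ofFn ξ).take (i + 1)) x = 2 ^ (i + 1 : ℕ) • x + halfShift (ξ i) := by
  rw [List.take_add_one, List.getElem?_ofFn, dif_pos i.2, Option.toList_some,
    wordMap_half_append_singleton, List.length_take, List.length_ofFn, min_eq_left i.2.le]

theorem wordMap_half_ofFn {k : ℕ} (ξ : Fin (k + 1) → Bool) (x : UnitAddCircle) :
    wordMap (1 / 2) (List.ofFn ξ) x = 2 ^ (k + 1) • x + halfShift (ξ (Fin.last k)) := by
  rw [List.ofFn_succ', List.concat_eq_append, wordMap_half_append_singleton, List.length_ofFn]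

theorem norm_nsmul_add_halfShift_lt_iff {x : UnitAddCircle} {n : ℕ} {r : ℝ} (s : Bool)
    (hx : ‖x‖ < r) (h : (n + 1) * r ≤ 1 / 2) :
    ‖n • x + halfShift s‖ < r ↔ s = false ∧ ‖n • x‖ < r := by
  cases s
  · simp [halfShift]
  · have hnx : ‖n • x‖ ≤ n * r :=
      norm_nsmul_le.trans (mul_le_mul_of_nonneg_left hx.le n.cast_nonneg)
    have := UnitAddCircle.sub_norm_le_norm_add_half (n • x)
    simp only [halfShift, if_true, Bool.true_eq_false, false_and, iff_false, not_lt]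
    linarith

def returnWord (k : ℕ) : Fin (k + 1) → Bool := fun i => decide ((i : ℕ) < k)

theorem eq_returnWord_iff {k : ℕ} {ξ : Fin (k + 1) → Bool} :
    ξ = returnWord k ↔ (∀ i : Fin (k + 1), (i : ℕ) < k → ξ i = true) ∧ ξ (Fin.last k) = false := by
  refine ⟨by rintro rfl; simp [returnWord], fun ⟨hinit, hlast⟩ => funext fun i => ?_⟩
  by_cases hi : (i : ℕ) < k
  · simp [returnWord, hi, hinit i hi]
  · obtain rfl : i = Fin.last k := Fin.ext (by simp; omega)
    simp [returnWord, hlast]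

def firstReturnSet (b : ℝ) (k : ℕ) (ξ : Fin (k + 1) → Bool) (r : ℝ) : Set UnitAddCircle :=
  ball 0 r ∩ (⋂ j ∈ Finset.Icc 1 k, wordMap b ((List.ofFn ξ).take j) ⁻¹' (ball 0 r)ᶜ)
    ∩ wordMap b (List.ofFn ξ) ⁻¹' ball 0 r

theorem mem_firstReturnSet_half_iff {k : ℕ} {ξ : Fin (k + 1) → Bool} {r : ℝ} {x : UnitAddCircle} :
    x ∈ firstReturnSet (1 / 2) k ξ r ↔ ‖x‖ < r ∧
      (∀ i : Fin (k + 1), (i : ℕ) < k → r ≤ ‖2 ^ (i + 1 : ℕ) • x + halfShift (ξ i)‖) ∧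
      ‖2 ^ (k + 1) • x + halfShift (ξ (Fin.last k))‖ < r := by
  simp only [firstReturnSet, mem_inter_iff, mem_iInter, mem_preimage, mem_compl_iff,
    mem_ball_zero_iff, Finset.mem_Icc, wordMap_half_ofFn, and_assoc]
  refine and_congr_right fun _ => and_congr_left fun _ => ⟨fun h i hi => ?_, fun h j hj => ?_⟩
  · have hi' := h (i + 1) ⟨by omega, by omega⟩
    rwa [wordMap_half_ofFn_take, not_lt] at hi'
  · obtain ⟨i, rfl⟩ : ∃ i, j = i + 1 := ⟨j - 1, by omega⟩
    rw [wordMap_half_ofFn_take ξ ⟨i, by omega⟩, not_lt]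
    exact h ⟨i, by omega⟩ (by change i < k; omega)

theorem mem_firstReturnSet_half_iff_of_small {k : ℕ} {ξ : Fin (k + 1) → Bool} {r : ℝ}
    {x : UnitAddCircle} (hr : 2 ^ (k + 2) * r ≤ 1 / 2) :
    x ∈ firstReturnSet (1 / 2) k ξ r ↔ ξ = returnWord k ∧ ‖x‖ < r / 2 ^ (k + 1) := by
  rw [mem_firstReturnSet_half_iff, eq_returnWord_iff]
  by_cases hx : ‖x‖ < r
  swap
  · exact iff_of_false (fun h => hx h.1)
      fun h => hx (by simpa using norm_two_pow_nsmul_lt_of_lt_div (Nat.zero_le _) h.2)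
  have hfar : ∀ n ≤ k + 1, ((2 ^ n : ℕ) + 1 : ℝ) * r ≤ 1 / 2 := fun n hn => by
    have : (2 : ℝ) ^ n ≤ 2 ^ (k + 1) := pow_le_pow_right₀ one_le_two hn
    have : (1 : ℝ) ≤ 2 ^ (k + 1) := one_le_pow₀ one_le_two
    have : (2 : ℝ) ^ (k + 2) = 2 * 2 ^ (k + 1) := pow_succ' 2 (k + 1)
    push_cast
    nlinarith [(norm_nonneg x).trans hx.le]
  have hlast_iff : ‖2 ^ (k + 1) • x‖ < r ↔ ‖x‖ < r / 2 ^ (k + 1) := by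
    have hfar' := hfar (k + 1) le_rfl
    push_cast at hfar'
    have h := UnitAddCircle.norm_nsmul_lt_iff (x := x) (n := 2 ^ (k + 1)) (r := r)
      (by positivity) (by
        push_cast
        nlinarith [mul_le_mul_of_nonneg_left hx.le (by positivity : (0 : ℝ) ≤ 2 ^ (k + 1))])
    exact_mod_cast h
  constructor
  · rintro ⟨-, hmid, hlast⟩
    obtain ⟨hξ, hlast⟩ := (norm_nsmul_add_halfShift_lt_iff _ hx (hfar _ le_rfl)).1 hlast
    have hsmall := hlast_iff.1 hlast
    refine ⟨⟨fun i hi => ?_, hξ⟩, hsmall⟩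
    by_contra hξi
    rw [Bool.not_eq_true] at hξi
    exact (hmid i hi).not_gt ((norm_nsmul_add_halfShift_lt_iff _ hx (hfar _ (by omega))).2
      ⟨hξi, norm_two_pow_nsmul_lt_of_lt_div (by omega) hsmall⟩)
  · rintro ⟨⟨hmid, hξ⟩, hsmall⟩
    refine ⟨hx, fun i hi => ?_, (norm_nsmul_add_halfShift_lt_iff _ hx (hfar _ le_rfl)).2
      ⟨hξ, hlast_iff.2 hsmall⟩⟩
    rw [← not_lt, norm_nsmul_add_halfShift_lt_iff _ hx (hfar _ (by omega)), hmid i hi]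
    simp

theorem firstReturnSet_half_eq {k : ℕ} (ξ : Fin (k + 1) → Bool) {r : ℝ}
    (hr : 2 ^ (k + 2) * r ≤ 1 / 2) :
    firstReturnSet (1 / 2) k ξ r = if ξ = returnWord k then ball 0 (r / 2 ^ (k + 1)) else ∅ := by
  ext x
  rw [mem_firstReturnSet_half_iff_of_small hr]
  split_ifs with h <;> simp [h]

theorem two_inv_pow_mul_ofReal_div_ofReal (n : ℕ) {r : ℝ} (hr : 0 < r) :
    (2⁻¹ : ℝ≥0∞) ^ n * ENNReal.ofReal (2 * (r / 2 ^ n)) / ENNReal.ofReal (2 * r) = (1 / 4) ^ n := by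
  have h2 : (2⁻¹ : ℝ≥0∞) ^ n = ENNReal.ofReal (2⁻¹ ^ n) := by
    rw [ENNReal.ofReal_pow (by norm_num), ENNReal.ofReal_inv_of_pos two_pos, ENNReal.ofReal_ofNat]
  have h4 : (1 / 4 : ℝ≥0∞) ^ n = ENNReal.ofReal ((1 / 4) ^ n) := by
    rw [ENNReal.ofReal_pow (by norm_num), ENNReal.ofReal_div_of_pos four_pos, ENNReal.ofReal_one,
      ENNReal.ofReal_ofNat]
  rw [h2, h4, ← ENNReal.ofReal_mul (by positivity), ← ENNReal.ofReal_div_of_pos (by positivity)]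
  congr 1
  field_simp
  rw [← mul_pow]
  norm_num

/-- Annealed Bernoulli(1/2,1/2) mixture of `f₀(x) = 2x` and `f₁(x) = 2x + 1/2` at the
target point `0`: for every `k ≥ 0` the cluster coefficient
`q_k = lim_{r→0⁺} Σ_{ξ ∈ {0,1}^{k+1}} 2^{-(k+1)}
  λ(B(0,r) ∩ ⋂_{j=1}^k (F_ξ^j)⁻¹ B(0,r)ᶜ ∩ (F_ξ^{k+1})⁻¹ B(0,r)) / λ(B(0,r))`
equals `4^{-(k+1)}`. -/
theorem stmt8 (k : ℕ) :
    Tendsto (fun r : ℝ =>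
      (∑ ξ : Fin (k+1) → Bool,
        (2⁻¹ : ℝ≥0∞)^(k+1) * volume (ball (0 : UnitAddCircle) r
          ∩ (⋂ j ∈ Finset.Icc 1 k,
              (wordMap (1/2) ((List.ofFn ξ).take j)) ⁻¹' (ball (0 : UnitAddCircle) r)ᶜ)
          ∩ (wordMap (1/2) (List.ofFn ξ)) ⁻¹' ball (0 : UnitAddCircle) r))
        / volume (ball (0 : UnitAddCircle) r))
      (nhdsWithin 0 (Set.Ioi 0)) (nhds ((1/4 : ℝ≥0∞)^(k+1))) := by
  refine tendsto_const_nhds.congr' ?_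
  filter_upwards [Ioo_mem_nhdsGT (by positivity : (0 : ℝ) < (2 ^ (k + 3))⁻¹)] with r ⟨hr0, hrk⟩
  have hr : 2 ^ (k + 2) * r ≤ 1 / 2 := by
    have h := mul_lt_mul_of_pos_left hrk (pow_pos two_pos (k + 3))
    rw [mul_inv_cancel₀ (by positivity), pow_succ] at h
    linarith
  have hr_half : r ≤ 1 / 2 := by nlinarith [one_le_pow₀ (M₀ := ℝ) one_le_two (n := k + 2)]
  change _ = (∑ ξ, _ * volume (firstReturnSet (1 / 2) k ξ r)) / _
  simp only [firstReturnSet_half_eq _ hr, apply_ite volume, measure_empty, mul_ite, mul_zero,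
    Finset.sum_ite_eq', Finset.mem_univ, if_true]
  rw [UnitAddCircle.volume_ball_zero hr_half, UnitAddCircle.volume_ball_zero
    ((div_le_self hr0.le (one_le_pow₀ one_le_two)).trans hr_half),
    two_inv_pow_mul_ofReal_div_ofReal (k + 1) hr0]
end

section
/- Let T : [0,1) → [0,1) be the piecewise linear Markov map T(x) = 3x for x ∈ [0,1/3), T(x) = 5/3 − 2x for x ∈ [1/3,2/3), T(x) = 3x − 2 for x ∈ [2/3,1), let h = 3/5 on [0,1/3) and h = 6/5 on [1/3,1), and let μ = h·Leb be the associated T-invariant probability measure. Then lim_{r→0⁺} (μ ⊗ μ)( {(x,y) ∈ [0,1)² : |x−y| < r and |T(x) − T(y)| < r} ) / (μ ⊗ μ)( {(x,y) ∈ [0,1)² : |x−y| < r} ) = 11/27. (Hence the dynamical extremal index of T for k = 2 is θ_2 = 1 − 11/27 = 16/27 ≈ 0.5926, in agreement with the formula θ_2 = 1 − (∫ h²/|DT|)/(∫ h²).) -/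
/-!
Near the diagonal, `μ ⊗ μ` equals `h_i² · Leb²` on each diagonal block `I_i × I_i` of the
Markov partition, while the rest of the `r`-neighbourhood of the diagonal lies in two boxes of
side `2r` around the breakpoints and has measure `O(r²)`. On `I_i × I_i` the condition
`|T x - T y| < r` reads `|x - y| < r / |T'|`, so up to `O(r²)` both sets are unions of diagonal
strips, of area `2 w |I_i|` for width `w`: the return set has measure `22/25 · r + O(r²)` and the
neighbourhood `54/25 · r + O(r²)`, whence the ratio `11/27`.
-/

open MeasureTheory Set Filter
open scoped ENNReal Topology

def diagStrip (s t w : ℝ) : Set (ℝ × ℝ) :=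
  {p | p.1 ∈ Ico s t ∧ p.2 ∈ Ico s t ∧ |p.1 - p.2| < w}

lemma diagStrip_subset (a b c d r : ℝ) :
    diagStrip a d r ⊆ Ico a b ×ˢ Ico a b ∪ Ico b c ×ˢ Ico b c ∪ Ico c d ×ˢ Ico c d ∪
      (Ico (b - r) (b + r) ×ˢ Ico (b - r) (b + r) ∪
        Ico (c - r) (c + r) ×ˢ Ico (c - r) (c + r)) := by
  rintro ⟨x, y⟩ ⟨⟨hx₀, hx₁⟩, ⟨hy₀, hy₁⟩, hxy⟩
  rw [abs_sub_lt_iff] at hxy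
  simp only [mem_union, mem_prod, mem_Ico]
  grind

lemma diagStrip_inter_prod_self {s t u v : ℝ} (hsub : Ico s t ⊆ Ico u v) (w : ℝ) :
    diagStrip u v w ∩ Ico s t ×ˢ Ico s t = diagStrip s t w := by
  ext p
  exact ⟨fun ⟨⟨_, _, hw⟩, hx, hy⟩ => ⟨hx, hy, hw⟩,
    fun ⟨hx, hy, hw⟩ => ⟨⟨hsub hx, hsub hy, hw⟩, hx, hy⟩⟩

lemma diagStrip_inter_affine {T : ℝ → ℝ} {a b s t u v : ℝ} (hsub : Ico s t ⊆ Ico u v)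
    (hT : ∀ x ∈ Ico s t, T x = a * x + b) (ha : 1 ≤ |a|) (w : ℝ) :
    (diagStrip u v w ∩ {p | |T p.1 - T p.2| < w}) ∩ Ico s t ×ˢ Ico s t
      = diagStrip s t (|a|⁻¹ * w) := by
  have ha₀ : 0 < |a| := by linarith
  have hTw : ∀ x ∈ Ico s t, ∀ y ∈ Ico s t, |T x - T y| < w ↔ |x - y| < |a|⁻¹ * w := by
    intro x hx y hy
    rw [hT x hx, hT y hy, show a * x + b - (a * y + b) = a * (x - y) by ring, abs_mul,
      lt_inv_mul_iff₀ ha₀]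
  rw [inter_right_comm, diagStrip_inter_prod_self hsub]
  ext p
  refine ⟨fun ⟨⟨hx, hy, _⟩, hTxy⟩ => ⟨hx, hy, (hTw _ hx _ hy).1 hTxy⟩,
    fun ⟨hx, hy, hw⟩ => ⟨⟨hx, hy, hw.trans_le ?_⟩, (hTw _ hx _ hy).2 hw⟩⟩
  have hw₀ : 0 ≤ w := (pos_of_mul_pos_right ((abs_nonneg _).trans_lt hw) (by positivity)).le
  exact mul_le_of_le_one_left hw₀ (inv_le_one_of_one_le₀ ha)

lemma volume_shear_preimage {A B : Set ℝ} (hA : MeasurableSet A) (hB : MeasurableSet B) :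
    (volume.prod volume) ((fun p : ℝ × ℝ => (p.1, p.2 - p.1)) ⁻¹' (A ×ˢ B))
      = volume A * volume B := by
  rw [(measurePreserving_prod_sub volume volume).measure_preimage
    (hA.prod hB).nullMeasurableSet, Measure.prod_prod]

lemma volume_diagStrip_le (s t : ℝ) {w : ℝ} (hw : 0 ≤ w) :
    (volume.prod volume) (diagStrip s t w) ≤ ENNReal.ofReal (2 * w * (t - s)) := by
  calc (volume.prod volume) (diagStrip s t w)
      ≤ (volume.prod volume)
          ((fun p : ℝ × ℝ => (p.1, p.2 - p.1)) ⁻¹' (Ico s t ×ˢ Ioo (-w) w)) := by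
        refine measure_mono fun p ⟨hx, _, hxy⟩ => ⟨hx, ?_, ?_⟩ <;>
          linarith [abs_sub_lt_iff.1 hxy]
    _ = ENNReal.ofReal (2 * w * (t - s)) := by
        rw [volume_shear_preimage measurableSet_Ico measurableSet_Ioo, Real.volume_Ico,
          Real.volume_Ioo, ← ENNReal.ofReal_mul' (by linarith)]
        ring_nf

lemma le_volume_diagStrip (s t : ℝ) {w : ℝ} (hw : 0 ≤ w) :
    ENNReal.ofReal (2 * w * (t - s - 2 * w)) ≤ (volume.prod volume) (diagStrip s t w) := by
  calc ENNReal.ofReal (2 * w * (t - s - 2 * w))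
      = (volume.prod volume)
          ((fun p : ℝ × ℝ => (p.1, p.2 - p.1)) ⁻¹' (Ico (s + w) (t - w) ×ˢ Ioo (-w) w)) := by
        rw [volume_shear_preimage measurableSet_Ico measurableSet_Ioo, Real.volume_Ico,
          Real.volume_Ioo, ← ENNReal.ofReal_mul' (by linarith)]
        ring_nf
    _ ≤ (volume.prod volume) (diagStrip s t w) := by
        refine measure_mono fun p ⟨⟨hx₀, hx₁⟩, hy₀, hy₁⟩ =>
          ⟨⟨?_, ?_⟩, ⟨?_, ?_⟩, abs_sub_lt_iff.2 ⟨?_, ?_⟩⟩ <;> simp only at * <;> linarith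

lemma const_mul_volume_diagStrip_bounds {c : ℝ} (hc : 0 ≤ c) (s t : ℝ) {w : ℝ} (hw : 0 ≤ w) :
    ENNReal.ofReal (c * c * (2 * w * (t - s - 2 * w)))
        ≤ ENNReal.ofReal c * ENNReal.ofReal c * (volume.prod volume) (diagStrip s t w) ∧
      ENNReal.ofReal c * ENNReal.ofReal c * (volume.prod volume) (diagStrip s t w)
        ≤ ENNReal.ofReal (c * c * (2 * w * (t - s))) := by
  rw [← ENNReal.ofReal_mul hc]
  constructor
  · rw [ENNReal.ofReal_mul (mul_nonneg hc hc)]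
    gcongr
    exact le_volume_diagStrip s t hw
  · rw [ENNReal.ofReal_mul (mul_nonneg hc hc)]
    gcongr
    exact volume_diagStrip_le s t hw

lemma Ico_prod_self_disjoint {a b c d : ℝ} (h : b ≤ c) :
    Disjoint (Ico a b ×ˢ Ico a b) (Ico c d ×ˢ Ico c d) :=
  disjoint_prod.2 (Or.inl (disjoint_left.2 fun _ hx hx' => by linarith [hx.2, hx'.1]))

lemma restrict_withDensity_eq_smul {α : Type*} [MeasurableSpace α] {ν : Measure α}
    {f : α → ℝ≥0∞} {A : Set α} {c : ℝ≥0∞} (hA : MeasurableSet A) (hf : ∀ x ∈ A, f x = c) :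
    (ν.withDensity f).restrict A = c • ν.restrict A := by
  rw [restrict_withDensity hA, withDensity_congr_ae (ae_restrict_of_forall_mem hA hf),
    withDensity_const]

lemma withDensity_le_smul {α : Type*} [MeasurableSpace α] {ν : Measure α}
    {f : α → ℝ≥0∞} {c : ℝ≥0∞} (hf : ∀ x, f x ≤ c) : ν.withDensity f ≤ c • ν :=
  withDensity_const (μ := ν) c ▸ withDensity_mono (ae_of_all _ hf)

lemma prod_apply_inter_prod_self {α : Type*} [MeasurableSpace α] {μ ν : Measure α}
    [SFinite μ] [SFinite ν] {A : Set α} {c : ℝ≥0∞} (hA : MeasurableSet A)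
    (h : μ.restrict A = c • ν.restrict A) (S : Set (α × α)) :
    (μ.prod μ) (S ∩ A ×ˢ A) = c * c * (ν.prod ν) (S ∩ A ×ˢ A) := by
  rw [← Measure.restrict_apply' (hA.prod hA), ← Measure.prod_restrict, h,
    Measure.prod_smul_left, Measure.prod_smul_right, smul_smul, Measure.smul_apply,
    Measure.prod_restrict, Measure.restrict_apply' (hA.prod hA), smul_eq_mul]

lemma measure_inter_add_inter_add_inter_le {α : Type*} [MeasurableSpace α] (ν : Measure α)
    (S : Set α) {A B C : Set α} (hA : MeasurableSet A) (hB : MeasurableSet B)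
    (hC : MeasurableSet C) (hAB : Disjoint A B) (hAC : Disjoint A C) (hBC : Disjoint B C) :
    ν (S ∩ A) + ν (S ∩ B) + ν (S ∩ C) ≤ ν S := by
  rw [← Measure.restrict_apply' hA, ← Measure.restrict_apply' hB, ← Measure.restrict_apply' hC,
    ← Measure.add_apply, ← Measure.add_apply, ← Measure.restrict_union hAB hB,
    ← Measure.restrict_union (disjoint_union_left.2 ⟨hAC, hBC⟩) hC]
  exact Measure.restrict_le_self S

lemma measure_le_of_subset_union {α : Type*} [MeasurableSpace α] (ν : Measure α)
    {S A B C V : Set α} (hS : S ⊆ A ∪ B ∪ C ∪ V) :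
    ν S ≤ ν (S ∩ A) + ν (S ∩ B) + ν (S ∩ C) + ν V := by
  calc ν S ≤ ν ((S ∩ A) ∪ (S ∩ B) ∪ (S ∩ C) ∪ V) := by
        refine measure_mono fun p hp => ?_
        rcases hS hp with ((hA | hB) | hC) | hV
        exacts [Or.inl (Or.inl (Or.inl ⟨hp, hA⟩)), Or.inl (Or.inl (Or.inr ⟨hp, hB⟩)),
          Or.inl (Or.inr ⟨hp, hC⟩), Or.inr hV]
    _ ≤ _ := by grw [measure_union_le, measure_union_le, measure_union_le]

lemma tendsto_div_of_linear_bounds {f g : ℝ → ℝ≥0∞} {a b C : ℝ} (hb : 0 < b)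
    (hf : ∀ᶠ r in 𝓝[>] 0,
      ENNReal.ofReal (a * r - C * r ^ 2) ≤ f r ∧ f r ≤ ENNReal.ofReal (a * r + C * r ^ 2))
    (hg : ∀ᶠ r in 𝓝[>] 0,
      ENNReal.ofReal (b * r - C * r ^ 2) ≤ g r ∧ g r ≤ ENNReal.ofReal (b * r + C * r ^ 2)) :
    Tendsto (fun r => f r / g r) (𝓝[>] 0) (𝓝 (ENNReal.ofReal (a / b))) := by
  have hlim : ∀ c : ℝ, Tendsto (fun r => ENNReal.ofReal ((a - c * r) / (b + c * r)))
      (𝓝[>] 0) (𝓝 (ENNReal.ofReal (a / b))) := fun c => by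
    have hcont : ContinuousAt (fun r : ℝ => (a - c * r) / (b + c * r)) 0 :=
      ContinuousAt.div (by fun_prop) (by fun_prop) (by simpa using hb.ne')
    exact ENNReal.tendsto_ofReal (by simpa using hcont.tendsto.mono_left nhdsWithin_le_nhds)
  have hpos : ∀ c : ℝ, ∀ᶠ r in 𝓝[>] (0 : ℝ), 0 < r ∧ 0 < b + c * r := fun c => by
    have hcont : Continuous fun r : ℝ => b + c * r := by fun_prop
    have : Tendsto (fun r : ℝ => b + c * r) (𝓝 0) (𝓝 b) := by simpa using hcont.tendsto 0
    exact Eventually.and self_mem_nhdsWithin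
      (nhdsWithin_le_nhds (this.eventually (lt_mem_nhds hb)))
  refine tendsto_of_tendsto_of_tendsto_of_le_of_le' (hlim C) (hlim (-C)) ?_ ?_
  · filter_upwards [hf, hg, hpos C] with r ⟨hf₁, _⟩ ⟨_, hg₂⟩ ⟨hr, hbr⟩
    calc ENNReal.ofReal ((a - C * r) / (b + C * r))
        = ENNReal.ofReal (a * r - C * r ^ 2) / ENNReal.ofReal (b * r + C * r ^ 2) := by
          rw [← ENNReal.ofReal_div_of_pos (by nlinarith)]
          congr 1
          field_simp
      _ ≤ f r / g r := ENNReal.div_le_div hf₁ hg₂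
  · filter_upwards [hf, hg, hpos (-C)] with r ⟨_, hf₂⟩ ⟨hg₁, _⟩ ⟨hr, hbr⟩
    calc f r / g r ≤ ENNReal.ofReal (a * r + C * r ^ 2) / ENNReal.ofReal (b * r - C * r ^ 2) :=
          ENNReal.div_le_div hf₂ hg₁
      _ = ENNReal.ofReal ((a - -C * r) / (b + -C * r)) := by
          rw [← ENNReal.ofReal_div_of_pos (by nlinarith)]
          congr 1
          field_simp
          ring

noncomputable def markovMap (x : ℝ) : ℝ :=
  if x < 1/3 then 3*x else if x < 2/3 then 5/3 - 2*x else 3*x - 2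

noncomputable def invariantDensity (x : ℝ) : ℝ := if x < 1/3 then 3/5 else 6/5

noncomputable def invariantMeasure : Measure ℝ :=
  (volume.restrict (Ico (0:ℝ) 1)).withDensity fun x => ENNReal.ofReal (invariantDensity x)

instance : SFinite invariantMeasure := by
  unfold invariantMeasure; infer_instance

lemma markovMap_eq_of_mem_Ico₁ : ∀ x ∈ Ico (0 : ℝ) (1/3), markovMap x = 3 * x + 0 :=
  fun x hx => by rw [markovMap, if_pos hx.2]; ring

lemma markovMap_eq_of_mem_Ico₂ : ∀ x ∈ Ico (1/3 : ℝ) (2/3), markovMap x = -2 * x + 5/3 :=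
  fun x hx => by rw [markovMap, if_neg (not_lt.2 hx.1), if_pos hx.2]; ring

lemma markovMap_eq_of_mem_Ico₃ : ∀ x ∈ Ico (2/3 : ℝ) 1, markovMap x = 3 * x + -2 :=
  fun x hx => by
    rw [markovMap, if_neg (not_lt.2 (by linarith [hx.1])), if_neg (not_lt.2 hx.1)]; ring

lemma invariantMeasure_restrict_Ico_of_le {s t : ℝ} (hs : 0 ≤ s) (ht : t ≤ 1/3) :
    invariantMeasure.restrict (Ico s t) = ENNReal.ofReal (3/5) • volume.restrict (Ico s t) := by
  rw [invariantMeasure, restrict_withDensity_eq_smul (c := ENNReal.ofReal (3/5))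
    measurableSet_Ico (fun x hx => by rw [invariantDensity, if_pos (hx.2.trans_le ht)]),
    Measure.restrict_restrict measurableSet_Ico,
    inter_eq_left.2 (Ico_subset_Ico hs (by linarith))]

lemma invariantMeasure_restrict_Ico_of_ge {s t : ℝ} (hs : 1/3 ≤ s) (ht : t ≤ 1) :
    invariantMeasure.restrict (Ico s t) = ENNReal.ofReal (6/5) • volume.restrict (Ico s t) := by
  rw [invariantMeasure, restrict_withDensity_eq_smul (c := ENNReal.ofReal (6/5))
    measurableSet_Ico (fun x hx => by rw [invariantDensity, if_neg (not_lt.2 (hs.trans hx.1))]),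
    Measure.restrict_restrict measurableSet_Ico,
    inter_eq_left.2 (Ico_subset_Ico (by linarith) ht)]

lemma invariantMeasure_le (s : Set ℝ) :
    invariantMeasure s ≤ ENNReal.ofReal (6/5) * volume s := by
  have hle : invariantMeasure ≤ ENNReal.ofReal (6/5) • volume.restrict (Ico 0 1) :=
    withDensity_le_smul fun x => ENNReal.ofReal_le_ofReal <| by
      unfold invariantDensity; split_ifs <;> norm_num
  calc invariantMeasure s ≤ ENNReal.ofReal (6/5) * volume.restrict (Ico 0 1) s := hle s
    _ ≤ ENNReal.ofReal (6/5) * volume s := by gcongr; exact Measure.restrict_le_self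

lemma prod_invariantMeasure_Ico_sq_le (b : ℝ) {r : ℝ} (hr : 0 ≤ r) :
    (invariantMeasure.prod invariantMeasure) (Ico (b - r) (b + r) ×ˢ Ico (b - r) (b + r))
      ≤ ENNReal.ofReal (144/25 * r ^ 2) := by
  rw [Measure.prod_prod]
  calc invariantMeasure (Ico (b - r) (b + r)) * invariantMeasure (Ico (b - r) (b + r))
      ≤ (ENNReal.ofReal (6/5) * ENNReal.ofReal (2 * r))
          * (ENNReal.ofReal (6/5) * ENNReal.ofReal (2 * r)) := by
        gcongr <;> exact (invariantMeasure_le _).trans_eq (by rw [Real.volume_Ico]; ring_nf)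
    _ = ENNReal.ofReal (144/25 * r ^ 2) := by
        rw [← ENNReal.ofReal_mul (by norm_num), ← ENNReal.ofReal_mul (by positivity)]
        ring_nf

/-- The main term is `(6 k₁ + 24 k₂ + 24 k₃) / 25 = Σᵢ 2 hᵢ² |Iᵢ| kᵢ`; `13` dominates both error
constants, `4 Σᵢ hᵢ² = 324/25` from the ends of the strips and `2 · 144/25` from the two boxes
at the breakpoints. -/
lemma prod_invariantMeasure_bounds {S : Set (ℝ × ℝ)} {r k₁ k₂ k₃ : ℝ} (hr : 0 ≤ r)
    (hk₁ : k₁ ∈ Icc 0 1) (hk₂ : k₂ ∈ Icc 0 1) (hk₃ : k₃ ∈ Icc 0 1)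
    (hS : S ⊆ diagStrip 0 1 r)
    (h₁ : S ∩ Ico 0 (1/3) ×ˢ Ico 0 (1/3) = diagStrip 0 (1/3) (k₁ * r))
    (h₂ : S ∩ Ico (1/3) (2/3) ×ˢ Ico (1/3) (2/3) = diagStrip (1/3) (2/3) (k₂ * r))
    (h₃ : S ∩ Ico (2/3) 1 ×ˢ Ico (2/3) 1 = diagStrip (2/3) 1 (k₃ * r)) :
    ENNReal.ofReal ((6 * k₁ + 24 * k₂ + 24 * k₃) / 25 * r - 13 * r ^ 2)
        ≤ (invariantMeasure.prod invariantMeasure) S ∧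
      (invariantMeasure.prod invariantMeasure) S
        ≤ ENNReal.ofReal ((6 * k₁ + 24 * k₂ + 24 * k₃) / 25 * r + 13 * r ^ 2) := by
  obtain ⟨lo₁, hi₁⟩ := const_mul_volume_diagStrip_bounds (c := 3/5) (by norm_num) 0 (1/3)
    (mul_nonneg hk₁.1 hr)
  obtain ⟨lo₂, hi₂⟩ := const_mul_volume_diagStrip_bounds (c := 6/5) (by norm_num) (1/3) (2/3)
    (mul_nonneg hk₂.1 hr)
  obtain ⟨lo₃, hi₃⟩ := const_mul_volume_diagStrip_bounds (c := 6/5) (by norm_num) (2/3) 1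
    (mul_nonneg hk₃.1 hr)
  rw [← h₁, ← prod_apply_inter_prod_self measurableSet_Ico
    (invariantMeasure_restrict_Ico_of_le le_rfl le_rfl)] at lo₁ hi₁
  rw [← h₂, ← prod_apply_inter_prod_self measurableSet_Ico
    (invariantMeasure_restrict_Ico_of_ge le_rfl (by norm_num))] at lo₂ hi₂
  rw [← h₃, ← prod_apply_inter_prod_self measurableSet_Ico
    (invariantMeasure_restrict_Ico_of_ge (by norm_num) le_rfl)] at lo₃ hi₃
  set ν := invariantMeasure.prod invariantMeasure
  constructor
  · have hk₁_sq : k₁ * k₁ ≤ 1 := mul_le_one₀ hk₁.2 hk₁.1 hk₁.2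
    have hk₂_sq : k₂ * k₂ ≤ 1 := mul_le_one₀ hk₂.2 hk₂.1 hk₂.2
    have hk₃_sq : k₃ * k₃ ≤ 1 := mul_le_one₀ hk₃.2 hk₃.1 hk₃.2
    calc ENNReal.ofReal ((6 * k₁ + 24 * k₂ + 24 * k₃) / 25 * r - 13 * r ^ 2)
        ≤ ENNReal.ofReal (3/5 * (3/5) * (2 * (k₁ * r) * (1/3 - 0 - 2 * (k₁ * r)))
            + 6/5 * (6/5) * (2 * (k₂ * r) * (2/3 - 1/3 - 2 * (k₂ * r)))
            + 6/5 * (6/5) * (2 * (k₃ * r) * (1 - 2/3 - 2 * (k₃ * r)))) := by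
          gcongr
          nlinarith [mul_le_mul_of_nonneg_right hk₁_sq (sq_nonneg r),
            mul_le_mul_of_nonneg_right hk₂_sq (sq_nonneg r),
            mul_le_mul_of_nonneg_right hk₃_sq (sq_nonneg r)]
      _ ≤ ν (S ∩ Ico 0 (1/3) ×ˢ Ico 0 (1/3)) + ν (S ∩ Ico (1/3) (2/3) ×ˢ Ico (1/3) (2/3))
            + ν (S ∩ Ico (2/3) 1 ×ˢ Ico (2/3) 1) := by
          grw [ENNReal.ofReal_add_le, ENNReal.ofReal_add_le, lo₁, lo₂, lo₃]
      _ ≤ ν S := measure_inter_add_inter_add_inter_le ν S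
          (measurableSet_Ico.prod measurableSet_Ico) (measurableSet_Ico.prod measurableSet_Ico)
          (measurableSet_Ico.prod measurableSet_Ico) (Ico_prod_self_disjoint le_rfl)
          (Ico_prod_self_disjoint (by norm_num)) (Ico_prod_self_disjoint le_rfl)
  · have hw₁ := mul_nonneg hk₁.1 hr
    have hw₂ := mul_nonneg hk₂.1 hr
    have hw₃ := mul_nonneg hk₃.1 hr
    calc ν S ≤ ν (S ∩ Ico 0 (1/3) ×ˢ Ico 0 (1/3)) + ν (S ∩ Ico (1/3) (2/3) ×ˢ Ico (1/3) (2/3))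
            + ν (S ∩ Ico (2/3) 1 ×ˢ Ico (2/3) 1)
            + ν (Ico (1/3 - r) (1/3 + r) ×ˢ Ico (1/3 - r) (1/3 + r)
              ∪ Ico (2/3 - r) (2/3 + r) ×ˢ Ico (2/3 - r) (2/3 + r)) :=
          measure_le_of_subset_union ν (hS.trans (diagStrip_subset 0 (1/3) (2/3) 1 r))
      _ ≤ ENNReal.ofReal (3/5 * (3/5) * (2 * (k₁ * r) * (1/3 - 0)))
            + ENNReal.ofReal (6/5 * (6/5) * (2 * (k₂ * r) * (2/3 - 1/3)))
            + ENNReal.ofReal (6/5 * (6/5) * (2 * (k₃ * r) * (1 - 2/3)))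
            + (ENNReal.ofReal (144/25 * r ^ 2) + ENNReal.ofReal (144/25 * r ^ 2)) := by
          grw [hi₁, hi₂, hi₃, measure_union_le, prod_invariantMeasure_Ico_sq_le _ hr,
            prod_invariantMeasure_Ico_sq_le _ hr]
      _ = ENNReal.ofReal (3/5 * (3/5) * (2 * (k₁ * r) * (1/3 - 0))
            + 6/5 * (6/5) * (2 * (k₂ * r) * (2/3 - 1/3))
            + 6/5 * (6/5) * (2 * (k₃ * r) * (1 - 2/3))
            + (144/25 * r ^ 2 + 144/25 * r ^ 2)) := by
          rw [ENNReal.ofReal_add, ENNReal.ofReal_add, ENNReal.ofReal_add, ENNReal.ofReal_add]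
          all_goals nlinarith
      _ ≤ _ := ENNReal.ofReal_le_ofReal (by nlinarith)

lemma prod_invariantMeasure_diagStrip_bounds {r : ℝ} (hr : 0 ≤ r) :
    ENNReal.ofReal (54/25 * r - 13 * r ^ 2)
        ≤ (invariantMeasure.prod invariantMeasure) (diagStrip 0 1 r) ∧
      (invariantMeasure.prod invariantMeasure) (diagStrip 0 1 r)
        ≤ ENNReal.ofReal (54/25 * r + 13 * r ^ 2) := by
  have hblock : ∀ {s t : ℝ}, 0 ≤ s → t ≤ 1 →
      diagStrip 0 1 r ∩ Ico s t ×ˢ Ico s t = diagStrip s t (1 * r) := fun hs ht => by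
    rw [one_mul, diagStrip_inter_prod_self (Ico_subset_Ico hs ht)]
  convert prod_invariantMeasure_bounds hr (by norm_num) (by norm_num) (by norm_num) subset_rfl
    (hblock le_rfl (by norm_num)) (hblock (by norm_num) (by norm_num))
    (hblock (by norm_num) le_rfl) using 4 <;> norm_num

lemma prod_invariantMeasure_return_bounds {r : ℝ} (hr : 0 ≤ r) :
    ENNReal.ofReal (22/25 * r - 13 * r ^ 2) ≤ (invariantMeasure.prod invariantMeasure)
        (diagStrip 0 1 r ∩ {p | |markovMap p.1 - markovMap p.2| < r}) ∧
      (invariantMeasure.prod invariantMeasure)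
        (diagStrip 0 1 r ∩ {p | |markovMap p.1 - markovMap p.2| < r})
        ≤ ENNReal.ofReal (22/25 * r + 13 * r ^ 2) := by
  convert prod_invariantMeasure_bounds hr (k₁ := |3|⁻¹) (k₂ := |-2|⁻¹) (k₃ := |3|⁻¹)
    (by norm_num) (by norm_num) (by norm_num) inter_subset_left
    (diagStrip_inter_affine (Ico_subset_Ico le_rfl (by norm_num)) markovMap_eq_of_mem_Ico₁
      (by norm_num) r)
    (diagStrip_inter_affine (Ico_subset_Ico (by norm_num) (by norm_num))
      markovMap_eq_of_mem_Ico₂ (by norm_num) r)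
    (diagStrip_inter_affine (Ico_subset_Ico (by norm_num) le_rfl) markovMap_eq_of_mem_Ico₃
      (by norm_num) r)
    using 4 <;> norm_num

/-- Dynamical extremal index (k = 2) of the three-branch Markov map `T` with invariant
density `h` (`3/5` on `[0,1/3)`, `6/5` on `[1/3,1)`): the proportion of the
`r`-neighborhood of the diagonal returning to itself under `T × T` tends to
`(∫ h²/|DT|)/(∫ h²) = 11/27` as `r → 0⁺` (hence `θ₂ = 16/27`). -/
theorem stmt16 (T : ℝ → ℝ)
    (hT : ∀ x, T x = if x < 1/3 then 3*x else if x < 2/3 then 5/3 - 2*x else 3*x - 2)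
    (h : ℝ → ℝ) (hh : ∀ x, h x = if x < 1/3 then 3/5 else 6/5)
    (μ : Measure ℝ)
    (hμ : μ = (volume.restrict (Set.Ico (0:ℝ) 1)).withDensity
      fun x => ENNReal.ofReal (h x)) :
    Tendsto (fun r : ℝ =>
        (μ.prod μ) {x : ℝ × ℝ | x.1 ∈ Set.Ico (0:ℝ) 1 ∧ x.2 ∈ Set.Ico (0:ℝ) 1 ∧
            |x.1 - x.2| < r ∧ |T x.1 - T x.2| < r}
          / (μ.prod μ) {x : ℝ × ℝ | x.1 ∈ Set.Ico (0:ℝ) 1 ∧ x.2 ∈ Set.Ico (0:ℝ) 1 ∧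
            |x.1 - x.2| < r})
      (nhdsWithin 0 (Set.Ioi 0)) (nhds (11/27 : ℝ≥0∞)) := by
  obtain rfl : T = markovMap := funext hT
  obtain rfl : h = invariantDensity := funext hh
  obtain rfl : μ = invariantMeasure := hμ
  have hlim := tendsto_div_of_linear_bounds (by norm_num : (0 : ℝ) < 54/25)
    (eventually_nhdsWithin_of_forall fun _ hr => prod_invariantMeasure_return_bounds (le_of_lt hr))
    (eventually_nhdsWithin_of_forall fun _ hr =>
      prod_invariantMeasure_diagStrip_bounds (le_of_lt hr))
  convert hlim using 4 with r
  · ext p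
    simp only [diagStrip, mem_inter_iff, mem_ofPred_eq, and_assoc]
  · rfl
  · rw [show (22/25 : ℝ) / (54/25) = 11 / 27 by norm_num,
      ENNReal.ofReal_div_of_pos (by norm_num)]
    norm_num
end
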